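/- Let 𝒳 ⊆ ℝ^n be a nonempty convex set with ‖x − y‖ ≤ R for all x, y ∈ 𝒳, let α, μ > 0, ε > 0, G, M, V̄ ≥ 0 with d ∈ ℝ^n, ‖d‖ ≤ G, and λ ∈ ℝ^m with λ ≥ 0. Let g, g' : ℝ^n → ℝ^m, with the components of g convex, suppose there is x̃ ∈ 𝒳 with g(x̃) ≤ −ε·1, suppose ‖[g'(x) − g(x)]^+‖ ≤ V̄ for all x ∈ 𝒳, let x₀ ∈ 𝒳 and let x⁺ minimize ⟨d, x − x₀⟩ + ⟨λ, g(x)⟩ + ‖x − x₀‖²/(2α) over 𝒳, and assume ‖g'(x⁺)‖ ≤ M. Define λ' := [λ + μ·g'(x⁺)]^+. Then (‖λ'‖² − ‖λ‖²)/2 ≤ μ·(V̄ − ε)·‖λ‖ + 2·μ·G·R + μ·R²/(2α) + μ²·M²/2. -/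

import Mathlib

/-!
Since the positive projection is nonexpansive, `‖λ'‖² ≤ ‖λ‖² + 2μ⟪λ, g'(x⁺)⟫ + μ²‖g'(x⁺)‖²`.
Split `⟪λ, g'(x⁺)⟫ = ⟪λ, g'(x⁺) - g(x⁺)⟫ + ⟪λ, g(x⁺)⟫`: the first term is at most `V̄‖λ‖` because
`λ ≥ 0`, and comparing the minimality of `x⁺` with the Slater point `x̃` bounds the second by
`GR + R²/(2α) + ⟪λ, g(x̃)⟫ ≤ GR + R²/(2α) - ε‖λ‖`, using `‖λ‖ ≤ ∑ λᵢ` for `λ ≥ 0`.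
-/

open scoped RealInnerProductSpace

/-- Entrywise positive projection on `ℝ^m`. -/
noncomputable def posProj {m : ℕ} (v : EuclideanSpace ℝ (Fin m)) :
    EuclideanSpace ℝ (Fin m) := WithLp.toLp 2 (fun i => max (v i) 0)

section PosProj

variable {ι : Type*} [Fintype ι]

lemma EuclideanSpace.inner_eq_sum_mul (x y : EuclideanSpace ℝ ι) :
    ⟪x, y⟫ = ∑ i, x i * y i := by
  simp [PiLp.inner_apply, mul_comm]

lemma EuclideanSpace.norm_le_sum_of_nonneg {v : EuclideanSpace ℝ ι} (hv : ∀ i, 0 ≤ v i) :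
    ‖v‖ ≤ ∑ i, v i := by
  have hsq : ∑ i, ‖v i‖ ^ 2 ≤ (∑ i, v i) ^ 2 := by
    simp only [Real.norm_eq_abs, sq_abs]
    exact Finset.sum_sq_le_sq_sum_of_nonneg fun i _ => hv i
  rw [EuclideanSpace.norm_eq, ← Real.sqrt_sq (Finset.sum_nonneg fun i _ => hv i)]
  exact Real.sqrt_le_sqrt hsq

lemma EuclideanSpace.inner_le_neg_mul_norm {lam v : EuclideanSpace ℝ ι} {ε : ℝ}
    (hε : 0 ≤ ε) (hlam : ∀ i, 0 ≤ lam i) (hv : ∀ i, v i ≤ -ε) :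
    ⟪lam, v⟫ ≤ -ε * ‖lam‖ :=
  calc ⟪lam, v⟫ ≤ ∑ i, lam i * -ε := by
        rw [EuclideanSpace.inner_eq_sum_mul]
        exact Finset.sum_le_sum fun i _ => mul_le_mul_of_nonneg_left (hv i) (hlam i)
    _ = -ε * ∑ i, lam i := by rw [Finset.mul_sum]; simp only [mul_comm]
    _ ≤ -ε * ‖lam‖ :=
        mul_le_mul_of_nonpos_left (EuclideanSpace.norm_le_sum_of_nonneg hlam) (by linarith)

variable {m : ℕ}

lemma norm_posProj_le (v : EuclideanSpace ℝ (Fin m)) : ‖posProj v‖ ≤ ‖v‖ := by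
  rw [EuclideanSpace.norm_eq, EuclideanSpace.norm_eq]
  refine Real.sqrt_le_sqrt (Finset.sum_le_sum fun i _ => ?_)
  have hi : |max (v i) 0| ≤ |v i| := by
    rw [abs_of_nonneg (le_max_right _ _)]
    exact max_le (le_abs_self _) (abs_nonneg _)
  simpa [posProj, Real.norm_eq_abs] using pow_le_pow_left₀ (abs_nonneg _) hi 2

lemma inner_le_inner_posProj {lam : EuclideanSpace ℝ (Fin m)} (hlam : ∀ i, 0 ≤ lam i)
    (v : EuclideanSpace ℝ (Fin m)) : ⟪lam, v⟫ ≤ ⟪lam, posProj v⟫ := by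
  simp only [EuclideanSpace.inner_eq_sum_mul]
  exact Finset.sum_le_sum fun i _ =>
    mul_le_mul_of_nonneg_left (by simp [posProj]) (hlam i)

lemma norm_posProj_add_smul_sq_le (lam v : EuclideanSpace ℝ (Fin m)) (μ : ℝ) :
    ‖posProj (lam + μ • v)‖ ^ 2 ≤ ‖lam‖ ^ 2 + 2 * (μ * ⟪lam, v⟫) + μ ^ 2 * ‖v‖ ^ 2 := by
  have hexp : ‖lam + μ • v‖ ^ 2 = ‖lam‖ ^ 2 + 2 * (μ * ⟪lam, v⟫) + μ ^ 2 * ‖v‖ ^ 2 := by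
    rw [norm_add_sq_real, real_inner_smul_right, norm_smul, mul_pow, Real.norm_eq_abs, sq_abs]
  exact hexp ▸ pow_le_pow_left₀ (norm_nonneg _) (norm_posProj_le _) 2

end PosProj

lemma le_add_of_proximal_min {E : Type*} [NormedAddCommGroup E] [InnerProductSpace ℝ E]
    {d x₀ xp z : E} {h : E → ℝ} {α : ℝ} (hα : 0 < α)
    (hmin : ⟪d, xp - x₀⟫ + h xp + ‖xp - x₀‖ ^ 2 / (2 * α) ≤
      ⟪d, z - x₀⟫ + h z + ‖z - x₀‖ ^ 2 / (2 * α)) :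
    h xp ≤ h z + ‖d‖ * ‖z - xp‖ + ‖z - x₀‖ ^ 2 / (2 * α) := by
  have hlin : ⟪d, z - x₀⟫ - ⟪d, xp - x₀⟫ ≤ ‖d‖ * ‖z - xp‖ := by
    rw [← inner_sub_right, sub_sub_sub_cancel_right]
    exact real_inner_le_norm _ _
  have hprox : 0 ≤ ‖xp - x₀‖ ^ 2 / (2 * α) := by positivity
  linarith

theorem dual_drift_step_bound_general {n m : ℕ}
    (X : Set (EuclideanSpace ℝ (Fin n)))
    (R α μ ε G M Vbar : ℝ) (hα : 0 < α) (hμ : 0 < μ) (hε : 0 < ε)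
    (hR : ∀ x ∈ X, ∀ y ∈ X, ‖x - y‖ ≤ R)
    (d : EuclideanSpace ℝ (Fin n)) (hd : ‖d‖ ≤ G)
    (lam : EuclideanSpace ℝ (Fin m)) (hlam : ∀ i, 0 ≤ lam i)
    (g g' : EuclideanSpace ℝ (Fin n) → EuclideanSpace ℝ (Fin m))
    (hSlater : ∃ xt ∈ X, ∀ i, g xt i ≤ -ε)
    (hvar : ∀ x ∈ X, ‖posProj (g' x - g x)‖ ≤ Vbar)
    (x₀ : EuclideanSpace ℝ (Fin n)) (hx₀ : x₀ ∈ X)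
    (xp : EuclideanSpace ℝ (Fin n)) (hxpX : xp ∈ X)
    (hxpmin : ∀ z ∈ X,
      ⟪d, xp - x₀⟫ + ⟪lam, g xp⟫ + ‖xp - x₀‖ ^ 2 / (2 * α) ≤
        ⟪d, z - x₀⟫ + ⟪lam, g z⟫ + ‖z - x₀‖ ^ 2 / (2 * α))
    (hgM : ‖g' xp‖ ≤ M)
    (lam' : EuclideanSpace ℝ (Fin m)) (hlam' : lam' = posProj (lam + μ • g' xp)) :
    (‖lam'‖ ^ 2 - ‖lam‖ ^ 2) / 2 ≤
      μ * (Vbar - ε) * ‖lam‖ + 2 * μ * G * R + μ * R ^ 2 / (2 * α) +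
        μ ^ 2 * M ^ 2 / 2 := by
  obtain ⟨xt, hxtX, hxt⟩ := hSlater
  have hG : 0 ≤ G := (norm_nonneg d).trans hd
  have hGR : 0 ≤ G * R := mul_nonneg hG (by simpa using hR x₀ hx₀ x₀ hx₀)
  have hslater : ⟪lam, g xt⟫ ≤ -ε * ‖lam‖ :=
    EuclideanSpace.inner_le_neg_mul_norm hε.le hlam hxt
  have hcomp := le_add_of_proximal_min (h := fun z => ⟪lam, g z⟫) hα (hxpmin xt hxtX)
  have hdist : ‖d‖ * ‖xt - xp‖ ≤ G * R :=
    mul_le_mul hd (hR xt hxtX xp hxpX) (norm_nonneg _) hG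
  have hprox : ‖xt - x₀‖ ^ 2 / (2 * α) ≤ R ^ 2 / (2 * α) := by
    gcongr
    exact hR xt hxtX x₀ hx₀
  have hvar' : ⟪lam, g' xp - g xp⟫ ≤ ‖lam‖ * Vbar :=
    (inner_le_inner_posProj hlam _).trans <| (real_inner_le_norm _ _).trans <|
      mul_le_mul_of_nonneg_left (hvar xp hxpX) (norm_nonneg _)
  have hdual : ⟪lam, g' xp⟫ ≤ (Vbar - ε) * ‖lam‖ + G * R + R ^ 2 / (2 * α) := by
    rw [← sub_add_cancel (g' xp) (g xp), inner_add_right]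
    linarith
  have hdrift := hlam' ▸ norm_posProj_add_smul_sq_le lam (g' xp) μ
  calc (‖lam'‖ ^ 2 - ‖lam‖ ^ 2) / 2 ≤ μ * ⟪lam, g' xp⟫ + μ ^ 2 * ‖g' xp‖ ^ 2 / 2 := by linarith
    _ ≤ μ * ((Vbar - ε) * ‖lam‖ + G * R + R ^ 2 / (2 * α)) + μ ^ 2 * M ^ 2 / 2 := by
        gcongr
    _ ≤ _ := by
        have := mul_nonneg hμ.le hGR
        linarith [mul_div_assoc μ (R ^ 2) (2 * α)]

/-- Dual-drift bound at a MOSP step (inequality (14) in the proof of Theorem 1). -/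
theorem dual_drift_step_bound {n m : ℕ} (hm : 0 < m)
    (X : Set (EuclideanSpace ℝ (Fin n))) (hXne : X.Nonempty) (hXconv : Convex ℝ X)
    (R α μ ε G M Vbar : ℝ) (hα : 0 < α) (hμ : 0 < μ) (hε : 0 < ε)
    (hG : 0 ≤ G) (hM : 0 ≤ M) (hVbar : 0 ≤ Vbar)
    (hR : ∀ x ∈ X, ∀ y ∈ X, ‖x - y‖ ≤ R)
    (d : EuclideanSpace ℝ (Fin n)) (hd : ‖d‖ ≤ G)
    (lam : EuclideanSpace ℝ (Fin m)) (hlam : ∀ i, 0 ≤ lam i)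
    (g g' : EuclideanSpace ℝ (Fin n) → EuclideanSpace ℝ (Fin m))
    (hgconv : ∀ i, ConvexOn ℝ Set.univ fun x => g x i)
    (hSlater : ∃ xt ∈ X, ∀ i, g xt i ≤ -ε)
    (hvar : ∀ x ∈ X, ‖posProj (g' x - g x)‖ ≤ Vbar)
    (x₀ : EuclideanSpace ℝ (Fin n)) (hx₀ : x₀ ∈ X)
    (xp : EuclideanSpace ℝ (Fin n)) (hxpX : xp ∈ X)
    (hxpmin : ∀ z ∈ X,
      ⟪d, xp - x₀⟫ + ⟪lam, g xp⟫ + ‖xp - x₀‖ ^ 2 / (2 * α) ≤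
        ⟪d, z - x₀⟫ + ⟪lam, g z⟫ + ‖z - x₀‖ ^ 2 / (2 * α))
    (hgM : ‖g' xp‖ ≤ M)
    (lam' : EuclideanSpace ℝ (Fin m)) (hlam' : lam' = posProj (lam + μ • g' xp)) :
    (‖lam'‖ ^ 2 - ‖lam‖ ^ 2) / 2 ≤
      μ * (Vbar - ε) * ‖lam‖ + 2 * μ * G * R + μ * R ^ 2 / (2 * α) +
        μ ^ 2 * M ^ 2 / 2 :=
  dual_drift_step_bound_general X R α μ ε G M Vbar hα hμ hε hR d hd lam hlam g g' hSlater hvar x₀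
    hx₀ xp hxpX hxpmin hgM lam' hlam'
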